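/- Let q = p^e be a prime power, let 0 ≤ l ≤ e−1, let n ≤ q and k ≤ n. Let a_1,…,a_n be distinct elements of F_q and v_1,…,v_n nonzero elements of F_q, and set u_i = Π_{1≤j≤n, j≠i} (a_i − a_j)^{−1}. A codeword c = (v_1 f(a_1), …, v_n f(a_n), f_{k−1}) of the extended code GRS_k(a,v,∞) (with f ∈ F_q[x], deg f ≤ k−1 and f_{k−1} the coefficient of x^{k−1} in f) lies in GRS_k(a,v,∞)^{⊥_l} if and only if there exists a polynomial g(x) ∈ F_q[x] with deg g ≤ n−k such that (v_1^{p^l+1} f(a_1)^{p^l}, …, v_n^{p^l+1} f(a_n)^{p^l}, f_{k−1}^{p^l}) = (u_1 g(a_1), …, u_n g(a_n), −g_{n−k}), where g_{n−k} is the coefficient of x^{n−k} in g. -/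

import Mathlib

/-!
Write `u i = ∏_{j ≠ i} (a i - a j)⁻¹` (Mathlib's `Lagrange.nodalWeight`). Lagrange interpolation
gives `∑ i, u i * P(a i) = P_{n-1}` whenever `deg P < n`. With `w i = v i ^ (pˡ + 1) * f(a i) ^ pˡ`
and `β = f_{k-1} ^ pˡ`, membership in the Galois dual says `∑ i, w i * h(a i) + h_{k-1} * β = 0`
for every `h` of degree `< k`, because `x ↦ x ^ pˡ` is multiplicative.

If `w = u g` with `deg g ≤ n - k`, that sum is `(g h)_{n-1} + h_{k-1} β = (g_{n-k} + β) h_{k-1}`.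
Conversely, let `g` interpolate `w / u` in degree `< n`. Testing with `h = X ^ (n - 1 - deg g)`
returns the leading coefficient of `g`, which forces `deg g ≤ n - k`; then `h = X ^ (k - 1)`
yields `g_{n-k} = -β`.
For `k = 0` there is nothing to test, and adding a multiple of `∏ (X - a i)` to `g` adjusts `g_n`.
-/

open Finset Polynomial

/-- The `l`-Galois dual of a linear code `C ⊆ F^n` over a field `F` of characteristic `p`:
the set of `x` with `∑ i, y i * (x i)^(p^l) = 0` for all codewords `y ∈ C`. -/
def galoisDual (p l : ℕ) [Fact p.Prime] {F : Type*} [Field F] [CharP F p] {n : ℕ}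
    (C : Submodule F (Fin n → F)) : Submodule F (Fin n → F) where
  carrier := {x | ∀ y ∈ C, ∑ i, y i * x i ^ p ^ l = 0}
  zero_mem' := by
    intro y _
    have hp : p ^ l ≠ 0 := pow_ne_zero _ (Fact.out (p := p.Prime)).ne_zero
    simp [zero_pow hp]
  add_mem' := by
    intro a b ha hb y hy
    have h : ∀ i : Fin _, (a + b) i ^ p ^ l = a i ^ p ^ l + b i ^ p ^ l := by
      intro i
      simpa using add_pow_char_pow (a i) (b i) (p := p) (n := l)
    calc ∑ i, y i * (a + b) i ^ p ^ l
        = (∑ i, y i * a i ^ p ^ l) + ∑ i, y i * b i ^ p ^ l := by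
          rw [← Finset.sum_add_distrib]; exact Finset.sum_congr rfl fun i _ => by
            rw [h i, mul_add]
      _ = 0 := by rw [ha y hy, hb y hy, add_zero]
  smul_mem' := by
    intro c x hx y hy
    have h : ∀ i : Fin _, (c • x) i ^ p ^ l = c ^ p ^ l * x i ^ p ^ l := by
      intro i; simp [mul_pow]
    calc ∑ i, y i * (c • x) i ^ p ^ l
        = c ^ p ^ l * ∑ i, y i * x i ^ p ^ l := by
          rw [Finset.mul_sum]; exact Finset.sum_congr rfl fun i _ => by rw [h i]; ring
      _ = 0 := by rw [hx y hy, mul_zero]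

/-- The evaluation map for the extended GRS code:
`f ↦ (v₁ f(a₁), …, vₙ f(aₙ), f_{k-1})`, where `f_{k-1}` is the coefficient of `x^{k-1}`. -/
noncomputable def grsEvalExt (F : Type*) [Field F] (n k : ℕ) (a v : Fin n → F) :
    Polynomial F →ₗ[F] (Fin (n + 1) → F) where
  toFun f := Fin.snoc (fun i => v i * f.eval (a i)) (f.coeff (k - 1))
  map_add' f g := by
    funext x
    refine Fin.lastCases ?_ (fun i => ?_) x <;>
      simp [Fin.snoc_last, Fin.snoc_castSucc, mul_add]
  map_smul' c f := by
    funext x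
    refine Fin.lastCases ?_ (fun i => ?_) x
    · simp [Fin.snoc_last, smul_eq_mul]
    · simp [Fin.snoc_castSucc, smul_eq_mul]; ring

/-- The extended generalized Reed–Solomon code `GRS_k(a, v, ∞)`. -/
noncomputable def GRSCodeExt (F : Type*) [Field F] (n k : ℕ) (a v : Fin n → F) :
    Submodule F (Fin (n + 1) → F) :=
  (Polynomial.degreeLT F k).map (grsEvalExt F n k a v)

namespace Polynomial

variable {R : Type*} [CommRing R] {p : R[X]}

theorem mem_degreeLT_succ_iff {n : ℕ} : p ∈ degreeLT R (n + 1) ↔ p.natDegree ≤ n := by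
  rw [degreeLT_succ_eq_degreeLE, mem_degreeLE, natDegree_le_iff_degree_le]

theorem natDegree_le_pred_of_mem_degreeLT {n : ℕ} (hp : p ∈ degreeLT R n) :
    p.natDegree ≤ n - 1 := by
  rcases eq_or_ne p 0 with rfl | hp0
  · simp
  · have := (natDegree_lt_iff_degree_lt hp0).2 (mem_degreeLT.1 hp)
    omega

end Polynomial

namespace Lagrange

variable {F ι : Type*} [Field F] [DecidableEq ι] {s : Finset ι} {v : ι → F}

theorem sum_nodalWeight_mul_eval (hvs : Set.InjOn v s) {P : F[X]} (hP : P.degree < #s) :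
    ∑ i ∈ s, nodalWeight s v i * P.eval (v i) = P.coeff (#s - 1) := by
  rw [coeff_eq_sum hvs hP]
  refine sum_congr rfl fun i _ => ?_
  rw [nodalWeight, prod_inv_distrib, div_eq_inv_mul]

theorem sum_nodalWeight_mul_eval_mul_pow (hvs : Set.InjOn v s) {P : F[X]} {m : ℕ}
    (hP : P.natDegree + m < #s) :
    ∑ i ∈ s, nodalWeight s v i * P.eval (v i) * v i ^ m = P.coeff (#s - 1 - m) := by
  have hnat : (P * X ^ m).natDegree < #s :=
    (natDegree_mul_le_of_le le_rfl (natDegree_X_pow_le m)).trans_lt hP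
  have hdeg : (P * X ^ m).degree < (#s : WithBot ℕ) :=
    degree_le_natDegree.trans_lt (by exact_mod_cast hnat)
  have := sum_nodalWeight_mul_eval hvs hdeg
  simp only [eval_mul, eval_pow, eval_X, ← mul_assoc] at this
  rwa [show #s - 1 = #s - 1 - m + m by omega, coeff_mul_X_pow] at this

theorem exists_nodalWeight_mul_eval_eq (hvs : Set.InjOn v s) (w : ι → F) :
    ∃ P : F[X], P.degree < #s ∧ ∀ i ∈ s, w i = nodalWeight s v i * P.eval (v i) := by
  refine ⟨interpolate s v fun i => w i / nodalWeight s v i, degree_interpolate_lt _ hvs,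
    fun i hi => ?_⟩
  rw [eval_interpolate_at_node _ hvs hi, mul_div_cancel₀ _ (nodalWeight_ne_zero hvs hi)]

variable {k : ℕ} {w : ι → F} {β : F}

theorem sum_mul_eval_add_coeff_mul_eq_zero (hvs : Set.InjOn v s) (hk : k ≤ #s) {g : F[X]}
    (hg : g ∈ degreeLT F (#s - k + 1)) (hw : ∀ i ∈ s, w i = nodalWeight s v i * g.eval (v i))
    (hβ : β = -g.coeff (#s - k)) {h : F[X]} (hh : h ∈ degreeLT F k) :
    ∑ i ∈ s, w i * h.eval (v i) + h.coeff (k - 1) * β = 0 := by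
  rcases k.eq_zero_or_pos with rfl | hk0
  · obtain rfl : h = 0 := by simpa [mem_degreeLT] using hh
    simp
  have hgdeg := mem_degreeLT_succ_iff.1 hg
  have hhdeg := natDegree_le_pred_of_mem_degreeLT hh
  have hgh : (g * h).degree < (#s : WithBot ℕ) := degree_le_natDegree.trans_lt
    (by exact_mod_cast (natDegree_mul_le_of_le hgdeg hhdeg).trans_lt (by omega))
  calc ∑ i ∈ s, w i * h.eval (v i) + h.coeff (k - 1) * β
      = ∑ i ∈ s, nodalWeight s v i * (g * h).eval (v i) + h.coeff (k - 1) * β := by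
        congr 1
        exact sum_congr rfl fun i hi => by rw [hw i hi, eval_mul, mul_assoc]
    _ = g.coeff (#s - k) * h.coeff (k - 1) + h.coeff (k - 1) * β := by
        rw [sum_nodalWeight_mul_eval hvs hgh, show #s - 1 = #s - k + (k - 1) by omega,
          coeff_mul_add_eq_of_natDegree_le hgdeg hhdeg]
    _ = 0 := by rw [hβ]; ring

theorem exists_nodalWeight_mul_eval_eq_and_neg_coeff_card_eq (hvs : Set.InjOn v s)
    (w : ι → F) (β : F) :
    ∃ g ∈ degreeLT F (#s + 1),
      (∀ i ∈ s, w i = nodalWeight s v i * g.eval (v i)) ∧ β = -g.coeff #s := by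
  obtain ⟨G, hGdeg, hG⟩ := exists_nodalWeight_mul_eval_eq hvs w
  refine ⟨G - C β * nodal s v, ?_, fun i hi => ?_, ?_⟩
  · refine Submodule.sub_mem _ (degreeLT_mono (Nat.le_succ _) (mem_degreeLT.2 hGdeg)) ?_
    exact mem_degreeLT_succ_iff.2 (natDegree_C_mul_le _ _ |>.trans natDegree_nodal.le)
  · rw [eval_sub, eval_mul, eval_nodal_at_node hi, mul_zero, sub_zero, hG i hi]
  · rw [coeff_sub, coeff_C_mul, coeff_eq_zero_of_degree_lt hGdeg, ← natDegree_nodal (v := v),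
      nodal_monic.coeff_natDegree]
    ring

theorem exists_of_forall_sum_mul_eval_add_coeff_mul_eq_zero (hvs : Set.InjOn v s)
    (hk0 : 0 < k) (hk : k ≤ #s)
    (H : ∀ h ∈ degreeLT F k, ∑ i ∈ s, w i * h.eval (v i) + h.coeff (k - 1) * β = 0) :
    ∃ g ∈ degreeLT F (#s - k + 1),
      (∀ i ∈ s, w i = nodalWeight s v i * g.eval (v i)) ∧ β = -g.coeff (#s - k) := by
  obtain ⟨G, hGdeg, hG⟩ := exists_nodalWeight_mul_eval_eq hvs w
  have hmoment : ∀ m < k, G.natDegree + m < #s →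
      G.coeff (#s - 1 - m) + (X ^ m : F[X]).coeff (k - 1) * β = 0 := by
    intro m hm hGm
    have hsum :
        ∑ i ∈ s, w i * v i ^ m = ∑ i ∈ s, nodalWeight s v i * G.eval (v i) * v i ^ m :=
      sum_congr rfl fun i hi => by rw [hG i hi]
    have := H (X ^ m) (mem_degreeLT.2 (by rw [degree_X_pow]; exact_mod_cast hm))
    simp only [eval_pow, eval_X] at this
    rwa [hsum, sum_nodalWeight_mul_eval_mul_pow hvs hGm] at this
  have hGnat : G.natDegree ≤ #s - k := by
    by_contra! hlt
    have hG0 : G ≠ 0 := by rintro rfl; simp at hlt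
    have hGs : G.natDegree < #s := (natDegree_lt_iff_degree_lt hG0).2 hGdeg
    have := hmoment (#s - 1 - G.natDegree) (by omega) (by omega)
    rw [show #s - 1 - (#s - 1 - G.natDegree) = G.natDegree by omega, coeff_X_pow,
      if_neg (by omega), zero_mul, add_zero] at this
    exact hG0 (leadingCoeff_eq_zero.1 this)
  have htop := hmoment (k - 1) (by omega) (by omega)
  rw [show #s - 1 - (k - 1) = #s - k by omega, coeff_X_pow_self, one_mul] at htop
  exact ⟨G, mem_degreeLT_succ_iff.2 hGnat, hG, by linear_combination htop⟩

theorem forall_sum_mul_eval_add_coeff_mul_eq_zero_iff (hvs : Set.InjOn v s) (hk : k ≤ #s) :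
    (∀ h ∈ degreeLT F k, ∑ i ∈ s, w i * h.eval (v i) + h.coeff (k - 1) * β = 0) ↔
      ∃ g ∈ degreeLT F (#s - k + 1),
        (∀ i ∈ s, w i = nodalWeight s v i * g.eval (v i)) ∧ β = -g.coeff (#s - k) := by
  refine ⟨fun H => ?_, fun ⟨g, hg, hw, hβ⟩ h hh =>
    sum_mul_eval_add_coeff_mul_eq_zero hvs hk hg hw hβ hh⟩
  rcases k.eq_zero_or_pos with rfl | hk0
  · simpa only [Nat.sub_zero] using exists_nodalWeight_mul_eval_eq_and_neg_coeff_card_eq hvs w β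
  · exact exists_of_forall_sum_mul_eval_add_coeff_mul_eq_zero hvs hk0 hk H

end Lagrange

theorem mem_galoisDual_GRSCodeExt_iff {p l : ℕ} [Fact p.Prime] {F : Type*} [Field F] [CharP F p]
    {n k : ℕ} {a v : Fin n → F} {x : Fin (n + 1) → F} :
    x ∈ galoisDual p l (GRSCodeExt F n k a v) ↔ ∀ h ∈ degreeLT F k,
      ∑ i, v i * h.eval (a i) * x i.castSucc ^ p ^ l +
        h.coeff (k - 1) * x (Fin.last n) ^ p ^ l = 0 := by
  change (∀ y ∈ GRSCodeExt F n k a v, _) ↔ _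
  simp only [GRSCodeExt, Submodule.mem_map, forall_exists_index, and_imp,
    forall_apply_eq_imp_iff₂, Fin.sum_univ_castSucc, grsEvalExt, LinearMap.coe_mk, AddHom.coe_mk,
    Fin.snoc_castSucc, Fin.snoc_last]

theorem extGrs_mem_galoisDual_iff_general (p e l n k : ℕ) [Fact p.Prime] (hkn : k ≤ n)
    (a v : Fin n → GaloisField p e) (ha : Function.Injective a)
    (f : Polynomial (GaloisField p e)) :
    Fin.snoc (fun i => v i * f.eval (a i)) (f.coeff (k - 1)) ∈
        galoisDual p l (GRSCodeExt (GaloisField p e) n k a v) ↔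
      ∃ g ∈ Polynomial.degreeLT (GaloisField p e) (n - k + 1),
        (∀ i, v i ^ (p ^ l + 1) * f.eval (a i) ^ p ^ l =
          (∏ j ∈ Finset.univ.erase i, (a i - a j)⁻¹) * g.eval (a i)) ∧
        f.coeff (k - 1) ^ p ^ l = -g.coeff (n - k) := by
  rw [mem_galoisDual_GRSCodeExt_iff]
  simp only [Fin.snoc_castSucc, Fin.snoc_last]
  have hterm : ∀ (h : (GaloisField p e)[X]) i,
      v i * h.eval (a i) * (v i * f.eval (a i)) ^ p ^ l =
        v i ^ (p ^ l + 1) * f.eval (a i) ^ p ^ l * h.eval (a i) := fun _ _ => by ring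
  simp only [hterm]
  simpa only [card_fin, mem_univ, true_implies, Lagrange.nodalWeight] using
    Lagrange.forall_sum_mul_eval_add_coeff_mul_eq_zero_iff (s := univ) ha.injOn
      (by rwa [card_fin]) (w := fun i => v i ^ (p ^ l + 1) * f.eval (a i) ^ p ^ l)
      (β := f.coeff (k - 1) ^ p ^ l)

/-- Lemma 3: a codeword `(v₁ f(a₁), …, vₙ f(aₙ), f_{k-1})` of the extended
code `GRS_k(a, v, ∞)` lies in `GRS_k(a, v, ∞)^{⊥_l}` iff there is a polynomial `g` with
`deg g ≤ n - k` such that `vᵢ^{pˡ+1} f(aᵢ)^{pˡ} = uᵢ g(aᵢ)` for all `i` and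
`f_{k-1}^{pˡ} = -g_{n-k}`, where `uᵢ = ∏_{j ≠ i} (aᵢ - aⱼ)⁻¹`. -/
theorem extGrs_mem_galoisDual_iff (p e l n k : ℕ) [Fact p.Prime] (he : 0 < e)
    (hl : l ≤ e - 1) (hn : n ≤ p ^ e) (hkn : k ≤ n)
    (a v : Fin n → GaloisField p e) (ha : Function.Injective a) (hv : ∀ i, v i ≠ 0)
    (f : Polynomial (GaloisField p e)) (hf : f ∈ Polynomial.degreeLT (GaloisField p e) k) :
    Fin.snoc (fun i => v i * f.eval (a i)) (f.coeff (k - 1)) ∈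
        galoisDual p l (GRSCodeExt (GaloisField p e) n k a v) ↔
      ∃ g ∈ Polynomial.degreeLT (GaloisField p e) (n - k + 1),
        (∀ i, v i ^ (p ^ l + 1) * f.eval (a i) ^ p ^ l =
          (∏ j ∈ Finset.univ.erase i, (a i - a j)⁻¹) * g.eval (a i)) ∧
        f.coeff (k - 1) ^ p ^ l = -g.coeff (n - k) :=
  extGrs_mem_galoisDual_iff_general p e l n k hkn a v ha f
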